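/- For a closed surreal substructure S, the class S^{⧸ω} of S-fixed points equals the intersection over n ∈ ℕ of the n-fold imbrications S^{⧸n} = Ξ_S^n(No). -/

import Mathlib

open Ordinal

attribute [local instance] Classical.propDecidable

/-- A surreal number presented as a sign sequence: a map from an ordinal (its
length) to `{-1, +1}`, extended by `0` beyond its length. -/
structure SSurreal : Type 1 where
  length : Ordinal.{0}
  sign : Ordinal → ℤ
  sign_mem : ∀ α, α < length → sign α = 1 ∨ sign α = -1
  sign_zero : ∀ α, ¬ α < length → sign α = 0

namespace SSurreal

/-- Simplicity: `x ⊑ y`, i.e. `x` is an initial segment of `y`. -/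
def sle (x y : SSurreal) : Prop := ∀ α, α < x.length → x.sign α = y.sign α

/-- Strict simplicity `x ⊏ y`. -/
def slt (x y : SSurreal) : Prop := sle x y ∧ x ≠ y

/-- The (lexicographic, Conway) order on sign sequences. -/
def lt (x y : SSurreal) : Prop :=
  ∃ α, (∀ β, β < α → x.sign β = y.sign β) ∧ x.sign α < y.sign α

/-- The empty sign sequence, i.e. the surreal number `0`. -/
noncomputable def zero : SSurreal :=
  ⟨0, fun _ => 0, fun α h => absurd h (not_lt_of_ge (zero_le : (0 : Ordinal) ≤ α)), fun _ _ => rfl⟩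

/-- The ordinal `o` viewed as the constant `+1` sign sequence of length `o`. -/
noncomputable def ofOrdinal (o : Ordinal) : SSurreal :=
  ⟨o, fun α => if α < o then 1 else 0, fun α h => Or.inl (if_pos h), fun α h => if_neg h⟩

/-- The surreal number `1`. -/
noncomputable def one : SSurreal := ofOrdinal 1

/-- The surreal number `-1`. -/
noncomputable def negOne : SSurreal :=
  ⟨1, fun α => if α < 1 then -1 else 0, fun α h => Or.inr (if_pos h), fun α h => if_neg h⟩

/-- Negation: flip every sign. -/
noncomputable def neg (x : SSurreal) : SSurreal :=
  ⟨x.length, fun α => - x.sign α,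
    fun α h => by rcases x.sign_mem α h with h' | h' <;> simp [h'],
    fun α h => by simp [x.sign_zero α h]⟩

/-- Concatenation `x ∔ y` of sign sequences. -/
noncomputable def concat (x y : SSurreal) : SSurreal where
  length := x.length + y.length
  sign α := if α < x.length then x.sign α else y.sign (α - x.length)
  sign_mem := by
    intro α h
    by_cases hx : α < x.length
    · rw [if_pos hx]; exact x.sign_mem α hx
    · rw [if_neg hx]
      refine y.sign_mem _ ?_
      have hle : x.length ≤ α := not_lt.mp hx
      have := Ordinal.sub_lt_of_le hle (c := y.length)
      exact this.mpr h
  sign_zero := by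
    intro α h
    have hx : ¬ α < x.length := fun hx =>
      h (hx.trans_le (le_self_add))
    rw [if_neg hx]
    refine y.sign_zero _ ?_
    intro hy
    exact h ((Ordinal.sub_lt_of_le (not_lt.mp hx)).mp hy)

/-- The concatenation product `x ⨰ y` of sign sequences. -/
noncomputable def mul (x y : SSurreal) : SSurreal where
  length := x.length * y.length
  sign γ := if γ < x.length * y.length then y.sign (γ / x.length) * x.sign (γ % x.length) else 0
  sign_mem := by
    intro γ h
    rw [if_pos h]
    have hx0 : x.length ≠ 0 := by
      intro h0; rw [h0, zero_mul] at h; exact (not_lt_of_ge (zero_le : (0 : Ordinal) ≤ γ)) h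
    have h1 : γ / x.length < y.length := by
      rwa [Ordinal.div_lt hx0]
    have h2 : γ % x.length < x.length := Ordinal.mod_lt γ hx0
    rcases y.sign_mem _ h1 with hy | hy <;> rcases x.sign_mem _ h2 with hx | hx <;>
      simp [hy, hx]
  sign_zero := fun γ h => if_neg h

/-- `s` is the supremum of `C` with respect to simplicity. -/
def IsSimpSup (C : Set SSurreal) (s : SSurreal) : Prop :=
  (∀ x ∈ C, sle x s) ∧ ∀ t, (∀ x ∈ C, sle x t) → sle s t

/-- The supremum of a ⊏-chain of sign sequences (their union), when it
exists; junk value `zero` otherwise. -/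
noncomputable def chainSup (C : Set SSurreal) : SSurreal :=
  if h : ∃ s, IsSimpSup C s then h.choose else zero

/-- Transfinite concatenation `[α, f] = ∔_{γ<α} f(γ)`. -/
noncomputable def concatSum (α : Ordinal) (f : Ordinal → SSurreal) : SSurreal :=
  Ordinal.limitRecOn α zero (fun β ih => concat ih (f β))
    (fun γ _ ih => chainSup (Set.range fun p : Set.Iio γ => ih p.1 p.2))

/-- Restriction of `z` to an initial segment of length (at most) `β`. -/
noncomputable def trunc (z : SSurreal) (β : Ordinal) : SSurreal where
  length := min β z.length
  sign α := if α < min β z.length then z.sign α else 0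
  sign_mem := fun α h => by
    rw [if_pos h]; exact z.sign_mem α (h.trans_le (min_le_right _ _))
  sign_zero := fun α h => if_neg h

/-- The number of `+1` signs occurring in `s` strictly below `γ`. -/
noncomputable def countPlus (s : Ordinal → ℤ) (γ : Ordinal) : Ordinal :=
  Ordinal.limitRecOn γ 0 (fun β ih => if s β = 1 then ih + 1 else ih)
    (fun γ' _ ih => ⨆ β : Set.Iio γ', ih β.1 β.2)

/-- `τ_u`: the ordinal number of `+1` signs in the sign sequence of `u`. -/
noncomputable def tau (u : SSurreal) : Ordinal := countPlus u.sign u.length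

end SSurreal

namespace SSurreal

/-- `Ξ` is the parametrisation of the surreal substructure `S`: a
`(<, ⊏)`-isomorphism from `No` onto `S`. -/
def IsSubstructurePar (S : Set SSurreal) (Ξ : SSurreal → SSurreal) : Prop :=
  (∀ z, Ξ z ∈ S) ∧ (∀ y ∈ S, ∃ z, Ξ z = y) ∧
  (∀ z w, lt z w ↔ lt (Ξ z) (Ξ w)) ∧ (∀ z w, slt z w ↔ slt (Ξ z) (Ξ w))

/-- The parametrisation `Ξ` is closed: it commutes with simplicity-suprema of
nonempty ⊏-chains. -/
def IsClosedPar (Ξ : SSurreal → SSurreal) : Prop :=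
  ∀ C : Set SSurreal, C.Nonempty → IsChain slt C →
    ∀ s, IsSimpSup C s → IsSimpSup (Ξ '' C) (Ξ s)

end SSurreal

/-! If `z` lies in every `Ξ^[n](No)`, injectivity of `Ξ` gives a backward orbit `aₙ` with
`Ξ aₙ₊₁ = aₙ` and `a₀ = z`. Let `βₙ` be the first position where `aₙ` and `aₙ₊₁` differ.
The common initial segment of `aₙ₊₁` and `aₙ₊₂`, of length `βₙ₊₁`, is mapped by `Ξ` to a
common initial segment of `aₙ` and `aₙ₊₁` that is at least as long, so `βₙ` is non-increasing
and must fail to drop somewhere. There, order preservation forces the sign of the middle term to lie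
strictly between two other signs, so it is `0`: that term is an initial segment of both of its
neighbours, and then `⊑`-preservation forces `Ξ` to fix it, hence to fix `z`. -/

namespace SSurreal

variable {x y c : SSurreal} {α : Ordinal}

theorem sign_eq_zero_iff : x.sign α = 0 ↔ x.length ≤ α := by
  refine ⟨fun h => not_lt.mp fun hα => ?_, fun h => x.sign_zero α (not_lt.mpr h)⟩
  rcases x.sign_mem α hα with h' | h' <;> simp [h'] at h

theorem neg_one_le_sign : -1 ≤ x.sign α := by
  by_cases h : α < x.length
  · rcases x.sign_mem α h with h' | h' <;> simp [h']
  · simp [x.sign_zero α h]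

theorem sign_le_one : x.sign α ≤ 1 := by
  by_cases h : α < x.length
  · rcases x.sign_mem α h with h' | h' <;> simp [h']
  · simp [x.sign_zero α h]

theorem length_le_of_sign_eq (h : x.sign y.length = y.sign y.length) : x.length ≤ y.length :=
  sign_eq_zero_iff.mp (h.trans (sign_eq_zero_iff.mpr le_rfl))

theorem ext_sign (h : ∀ α, x.sign α = y.sign α) : x = y := by
  have hl : x.length = y.length :=
    le_antisymm (length_le_of_sign_eq (h _)) (length_le_of_sign_eq (h _).symm)
  cases x; cases y
  simp only [mk.injEq]
  exact ⟨hl, funext h⟩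

theorem length_le_of_sle (h : sle x y) : x.length ≤ y.length :=
  not_lt.mp fun hlt => by
    have := (h _ hlt).trans (sign_eq_zero_iff.mpr le_rfl)
    exact absurd (sign_eq_zero_iff.mp this) (not_le.mpr hlt)

theorem sle_antisymm (hxy : sle x y) (hyx : sle y x) : x = y := by
  refine ext_sign fun α => ?_
  by_cases hα : α < x.length
  · exact hxy α hα
  · have hα : x.length ≤ α := not_lt.mp hα
    rw [sign_eq_zero_iff.mpr hα, sign_eq_zero_iff.mpr ((length_le_of_sle hyx).trans hα)]

theorem length_lt_of_slt (h : slt x y) : x.length < y.length :=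
  (length_le_of_sle h.1).lt_of_ne fun hl =>
    h.2 (sle_antisymm h.1 fun α hα => (h.1 α (hl ▸ hα)).symm)

theorem trunc_sle (x : SSurreal) (β : Ordinal) : sle (trunc x β) x :=
  fun _ h => if_pos h

/-- The first position at which the sign sequences of `x` and `y` differ (`0` if `x = y`). -/
noncomputable def firstDiff (x y : SSurreal) : Ordinal :=
  sInf {α | x.sign α ≠ y.sign α}

theorem firstDiff_comm (x y : SSurreal) : firstDiff x y = firstDiff y x := by
  simp only [firstDiff, ne_comm]

theorem sign_eq_of_lt_firstDiff (h : α < firstDiff x y) : x.sign α = y.sign α :=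
  not_not.mp (notMem_of_lt_csInf' h)

theorem sign_firstDiff_ne (h : x ≠ y) : x.sign (firstDiff x y) ≠ y.sign (firstDiff x y) := by
  refine csInf_mem (s := {α | x.sign α ≠ y.sign α}) ?_
  by_contra hempty
  exact h (ext_sign fun α => not_not.mp fun hα => hempty ⟨α, hα⟩)

theorem le_firstDiff_of_sle (h : x ≠ y) (hx : sle c x) (hy : sle c y) :
    c.length ≤ firstDiff x y :=
  not_lt.mp fun hlt => sign_firstDiff_ne h ((hx _ hlt).symm.trans (hy _ hlt))

theorem firstDiff_le_length (h : x ≠ y) : firstDiff x y ≤ x.length := by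
  by_contra! hlt
  have hyx : y.length ≤ x.length :=
    length_le_of_sign_eq (sign_eq_of_lt_firstDiff hlt).symm
  apply sign_firstDiff_ne h
  rw [sign_eq_zero_iff.mpr hlt.le, sign_eq_zero_iff.mpr (hyx.trans hlt.le)]

theorem sle_of_length_le_firstDiff (h : x.length ≤ firstDiff x y) : sle x y :=
  fun _ hα => sign_eq_of_lt_firstDiff (hα.trans_le h)

theorem lt_iff_sign_firstDiff_lt : lt x y ↔ x.sign (firstDiff x y) < y.sign (firstDiff x y) := by
  refine ⟨fun ⟨α, hagree, hα⟩ => ?_, fun h => ⟨_, fun β => sign_eq_of_lt_firstDiff, h⟩⟩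
  have hle : firstDiff x y ≤ α := csInf_le' hα.ne
  obtain hlt | rfl := hle.lt_or_eq
  · exact absurd (hagree _ hlt) (csInf_mem (s := {α | x.sign α ≠ y.sign α}) ⟨α, hα.ne⟩)
  · exact hα

theorem lt_or_lt_of_ne (h : x ≠ y) : lt x y ∨ lt y x := by
  simp only [lt_iff_sign_firstDiff_lt, firstDiff_comm y x]
  exact lt_or_gt_of_ne (sign_firstDiff_ne h)

section Map

variable {Ξ : SSurreal → SSurreal}

theorem injective_of_lt_map (hlt : ∀ z w, lt z w → lt (Ξ z) (Ξ w)) : Function.Injective Ξ := by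
  intro x y hxy
  by_contra hne
  rcases lt_or_lt_of_ne hne with h | h
  · exact (lt_iff_sign_firstDiff_lt.mp (hxy ▸ hlt x y h)).ne rfl
  · exact (lt_iff_sign_firstDiff_lt.mp (hxy ▸ hlt y x h)).ne rfl

theorem sle_map (hslt : ∀ z w, slt z w → slt (Ξ z) (Ξ w)) (h : sle x y) : sle (Ξ x) (Ξ y) := by
  by_cases hxy : x = y
  · exact hxy ▸ fun _ _ => rfl
  · exact (hslt x y ⟨h, hxy⟩).1

theorem length_le_length_map (hslt : ∀ z w, slt z w → slt (Ξ z) (Ξ w)) (c : SSurreal) :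
    c.length ≤ (Ξ c).length := by
  suffices ∀ γ, ∀ c : SSurreal, c.length = γ → γ ≤ (Ξ c).length from this _ c rfl
  intro γ
  induction γ using WellFoundedLT.induction with
  | _ γ ih =>
    intro c hc
    by_contra! hshort
    set d := trunc c (Ξ c).length
    have hd : d.length = (Ξ c).length := min_eq_left (hc ▸ hshort.le)
    have hdc : slt d c := ⟨trunc_sle c _, fun h => hshort.ne (by rw [← hd, h, hc])⟩
    have hd_le := ih d.length (hd ▸ hshort) d rfl
    exact (hd_le.trans_lt (length_lt_of_slt (hslt d c hdc))).ne hd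

theorem firstDiff_le_firstDiff_map (hlt : ∀ z w, lt z w → lt (Ξ z) (Ξ w))
    (hslt : ∀ z w, slt z w → slt (Ξ z) (Ξ w)) (h : x ≠ y) :
    firstDiff x y ≤ firstDiff (Ξ x) (Ξ y) := by
  set c := trunc x (firstDiff x y)
  have hc : c.length = firstDiff x y := min_eq_left (firstDiff_le_length h)
  have hcx : sle c x := trunc_sle x _
  have hcy : sle c y := fun α hα => (hcx α hα).trans (sign_eq_of_lt_firstDiff (hc ▸ hα))
  calc firstDiff x y = c.length := hc.symm
    _ ≤ (Ξ c).length := length_le_length_map hslt c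
    _ ≤ firstDiff (Ξ x) (Ξ y) :=
      le_firstDiff_of_sle (injective_of_lt_map hlt |>.ne h) (sle_map hslt hcx) (sle_map hslt hcy)

theorem map_eq_self_of_firstDiff_eq (hlt : ∀ z w, lt z w → lt (Ξ z) (Ξ w))
    (hslt : ∀ z w, slt z w → slt (Ξ z) (Ξ w)) (hy : Ξ y = x) (hxy : x ≠ y)
    (hβ : firstDiff (Ξ x) x = firstDiff x y) : Ξ x = x := by
  by_contra hfix
  set β := firstDiff x y
  have hβ' : firstDiff x (Ξ x) = β := (firstDiff_comm _ _).trans hβ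
  have hup : x.sign β < y.sign β → (Ξ x).sign β < x.sign β := fun h => by
    have := hlt x y (lt_iff_sign_firstDiff_lt.mpr h)
    rwa [hy, lt_iff_sign_firstDiff_lt, hβ] at this
  have hdown : y.sign β < x.sign β → x.sign β < (Ξ x).sign β := fun h => by
    have := hlt y x (lt_iff_sign_firstDiff_lt.mpr (firstDiff_comm y x ▸ h))
    rwa [hy, lt_iff_sign_firstDiff_lt, hβ'] at this
  -- `x.sign β` lies strictly between `(Ξ x).sign β` and `y.sign β`, all in `{-1, 0, 1}`.
  have hzero : x.sign β = 0 := by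
    have h₁ : x.sign β ≠ y.sign β := sign_firstDiff_ne hxy
    have h₂ : (Ξ x).sign β ≠ x.sign β := hβ ▸ sign_firstDiff_ne hfix
    have := @neg_one_le_sign x β; have := @sign_le_one x β
    have := @neg_one_le_sign y β; have := @sign_le_one y β
    have := @neg_one_le_sign (Ξ x) β; have := @sign_le_one (Ξ x) β
    omega
  have hlen : x.length ≤ β := sign_eq_zero_iff.mp hzero
  have hxΞx : sle x (Ξ x) := sle_of_length_le_firstDiff (hβ' ▸ hlen)
  have hΞxx : sle (Ξ x) x := by
    simpa only [hy] using sle_map hslt (sle_of_length_le_firstDiff (y := y) hlen)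
  exact hfix (sle_antisymm hΞxx hxΞx)

theorem exists_map_eq_self_of_map_succ (hlt : ∀ z w, lt z w → lt (Ξ z) (Ξ w))
    (hslt : ∀ z w, slt z w → slt (Ξ z) (Ξ w)) (a : ℕ → SSurreal)
    (ha : ∀ n, Ξ (a (n + 1)) = a n) : ∃ n, Ξ (a n) = a n := by
  by_contra! hfix
  have hne : ∀ n, a (n + 1) ≠ a (n + 2) := fun n h =>
    hfix (n + 1) (by rw [h, ha (n + 1), h])
  let β n := firstDiff (a n) (a (n + 1))
  have hanti : ∀ n, β (n + 1) ≤ β n := fun n => by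
    simpa only [β, ha] using firstDiff_le_firstDiff_map hlt hslt (hne n)
  set N := Function.argmin β
  have hstable : β (N + 1) = β N := le_antisymm (hanti N) (Function.argmin_le β _)
  refine hfix (N + 1) (map_eq_self_of_firstDiff_eq hlt hslt (ha (N + 1)) (hne N) ?_)
  rw [ha N]
  exact hstable.symm

end Map

end SSurreal

open SSurreal in
theorem fixed_points_eq_iInter_iterates_general (S : Set SSurreal)
    (Ξ : SSurreal → SSurreal) (hS : IsSubstructurePar S Ξ) :
    {z : SSurreal | Ξ z = z} = ⋂ n : ℕ, Set.range (Ξ^[n]) := by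
  have hlt : ∀ z w, lt z w → lt (Ξ z) (Ξ w) := fun z w => (hS.2.2.1 z w).mp
  have hslt : ∀ z w, slt z w → slt (Ξ z) (Ξ w) := fun z w => (hS.2.2.2 z w).mp
  ext z
  simp only [Set.mem_ofPred_eq, Set.mem_iInter, Set.mem_range]
  refine ⟨fun hz n => ⟨z, Function.iterate_fixed hz n⟩, fun hz => ?_⟩
  choose a ha using hz
  have hstep : ∀ n, Ξ (a (n + 1)) = a n := fun n =>
    (injective_of_lt_map hlt).iterate n (by rw [← Function.iterate_succ_apply, ha, ha])
  obtain ⟨n, hn⟩ := exists_map_eq_self_of_map_succ hlt hslt a hstep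
  rw [← ha n, ← Function.iterate_succ_apply' Ξ n, Function.iterate_succ_apply, hn]

open SSurreal in
/-- for a closed surreal substructure `S`, the class of
`S`-fixed points equals the intersection of the `n`-fold imbrications
`S^{⧸n} = Ξ_S^n(No)`. -/
theorem fixed_points_eq_iInter_iterates (S : Set SSurreal)
    (Ξ : SSurreal → SSurreal) (hS : IsSubstructurePar S Ξ)
    (hcl : IsClosedPar Ξ) :
    {z : SSurreal | Ξ z = z} = ⋂ n : ℕ, Set.range (Ξ^[n]) :=
  fixed_points_eq_iInter_iterates_general S Ξ hS
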